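/- arXiv:2010.11417 — 3 statements merged into one kernel-verified Lean document; each statement's English description precedes it below -/
import Mathlib

section
/- Let Λ be a symmetric positive definite (p+h)×(p+h) matrix with blocks Λ_zz (p×p, positive definite), Λ_zx (p×h), Λ_xx (h×h); let Γ_zz be a symmetric positive definite p×p matrix and Γ_zx a p×h matrix; let D be a diagonal h×h matrix with positive diagonal entries. Define Ω_zx as the 2p×h matrix stacking Γ_zx on top of Λ_zx, and Ω_zz = [[Γ_zz⁻¹ Λ_zz Γ_zz⁻¹, −Γ_zz⁻¹], [−Γ_zz⁻¹, Λ_zz⁻¹]]. Then V = D⁻¹ (Ω_zx' Ω_zz Ω_zx + Λ_xx − Λ_zx' Λ_zz⁻¹ Λ_zx) D⁻¹ is positive definite. -/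
/-!
The sandwich `Ω_zz` factors as `Kᴴ Λ_zz⁻¹ K` with `K = [Λ_zz Γ_zz⁻¹, -1]`, so the quadratic
form `Ω_zxᴴ Ω_zz Ω_zx` is positive semidefinite. The Schur complement
`Λ_xx - Λ_zxᴴ Λ_zz⁻¹ Λ_zx` of the positive definite `Λ` is positive definite, hence so is the
sum, and congruence by the invertible `D⁻¹` preserves positive definiteness.
-/

open Matrix

namespace Matrix

variable {m n K : Type*} [Field K] [StarRing K]

lemma PosDef.toBlocks₁₁ {R : Type*} [Ring R] [PartialOrder R] [StarRing R]
    {M : Matrix (m ⊕ n) (m ⊕ n) R} (hM : M.PosDef) : M.toBlocks₁₁.PosDef :=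
  hM.submatrix Sum.inl_injective

lemma PosDef.schur_complement₁₁ [PartialOrder K] [Fintype m] [Fintype n] [DecidableEq m]
    {A : Matrix m m K} {B : Matrix m n K} {D : Matrix n n K}
    (hM : (fromBlocks A B Bᴴ D).PosDef) : (D - Bᴴ * A⁻¹ * B).PosDef := by
  have hA : A.PosDef := by simpa using hM.toBlocks₁₁
  let _ := hA.isUnit.invertible
  refine .of_dotProduct_mulVec_pos ((IsHermitian.fromBlocks₁₁ B D hA.1).mp hM.1) fun x hx => ?_
  -- the first block of the test vector is chosen to cancel the off-diagonal terms
  have hne : -((A⁻¹ * B) *ᵥ x) ⊕ᵥ x ≠ 0 := fun h0 =>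
    hx (funext fun i => congrFun h0 (.inr i))
  have := hM.dotProduct_mulVec_pos hne
  rwa [dotProduct_mulVec, schur_complement_eq₁₁ B D _ _ hA.1, neg_add_cancel, dotProduct_zero,
    zero_add, ← dotProduct_mulVec] at this

lemma fromBlocks_mul_neg_neg_inv_eq [Fintype m] [DecidableEq m] {A G : Matrix m m K}
    [Invertible A] (hA : A.IsHermitian) (hG : G.IsHermitian) :
    fromBlocks (G * A * G) (-G) (-G) A⁻¹ =
      (fromCols (A * G) (-1))ᴴ * A⁻¹ * fromCols (A * G) (-1) := by
  rw [conjTranspose_fromCols_eq_fromRows_conjTranspose, conjTranspose_mul, hA.eq, hG.eq,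
    conjTranspose_neg, conjTranspose_one, fromRows_mul, fromRows_mul_fromCols]
  simp [Matrix.mul_assoc]

lemma posSemidef_fromBlocks_mul_neg_neg_inv [PartialOrder K] [StarOrderedRing K] [Fintype m]
    [DecidableEq m] {A G : Matrix m m K} (hA : A.PosDef) (hG : G.IsHermitian) :
    (fromBlocks (G * A * G) (-G) (-G) A⁻¹).PosSemidef := by
  let _ := hA.isUnit.invertible
  rw [fromBlocks_mul_neg_neg_inv_eq hA.1 hG]
  exact hA.inv.posSemidef.conjTranspose_mul_mul_same _

end Matrix

theorem V_posDef (p h : ℕ)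
    (Λzz : Matrix (Fin p) (Fin p) ℝ) (Λzx : Matrix (Fin p) (Fin h) ℝ)
    (Λxx : Matrix (Fin h) (Fin h) ℝ)
    (hΛ : (Matrix.fromBlocks Λzz Λzx Λzxᵀ Λxx).PosDef)
    (Γzz : Matrix (Fin p) (Fin p) ℝ) (hΓzz : Γzz.PosDef)
    (Γzx : Matrix (Fin p) (Fin h) ℝ)
    (d : Fin h → ℝ) (hd : ∀ i, 0 < d i) :
    ((Matrix.diagonal d)⁻¹ *
      ((Matrix.fromRows Γzx Λzx)ᵀ *
        (Matrix.fromBlocks (Γzz⁻¹ * Λzz * Γzz⁻¹) (-Γzz⁻¹) (-Γzz⁻¹) Λzz⁻¹) *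
        (Matrix.fromRows Γzx Λzx)
       + Λxx - Λzxᵀ * Λzz⁻¹ * Λzx) *
      (Matrix.diagonal d)⁻¹).PosDef := by
  simp only [← conjTranspose_eq_transpose_of_trivial] at hΛ ⊢
  have hΛzz : Λzz.PosDef := by simpa using hΛ.toBlocks₁₁
  have hQuad := (posSemidef_fromBlocks_mul_neg_neg_inv hΛzz hΓzz.inv.1).conjTranspose_mul_mul_same
    (fromRows Γzx Λzx)
  have hSum := PosDef.posSemidef_add hQuad hΛ.schur_complement₁₁
  have hDinv := (PosDef.diagonal hd).inv
  rw [add_sub_assoc]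
  simpa only [hDinv.1.eq] using
    hSum.conjTranspose_mul_mul_same (mulVec_injective_of_isUnit hDinv.isUnit)
end

section
/- Suppose Λ = σ² Γ for σ² > 0, where Γ is symmetric positive definite of size p+h with blocks Γ_zz, Γ_zx, Γ_xx. Then V = D⁻¹(Ω_zx' Ω_zz Ω_zx + Λ_xx − Λ_zx' Λ_zz⁻¹ Λ_zx)D⁻¹ simplifies to V = σ² D⁻¹ (Γ_xx − Γ_zx' Γ_zz⁻¹ Γ_zx) D⁻¹, where Ω_zx = [Γ_zx; σ²Γ_zx] and Ω_zz = [[σ²Γ_zz⁻¹, −Γ_zz⁻¹], [−Γ_zz⁻¹, σ⁻²Γ_zz⁻¹]]. -/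
/-!
`Ω_zz` is `[[σ², -1], [-1, σ⁻²]] ⊗ Γ_zz⁻¹` and `Ω_zx` is `(1, σ²)ᵀ ⊗ Γ_zx`; since `(1, σ²)` lies in
the kernel of the `2 × 2` factor, `Ω_zx' Ω_zz Ω_zx = 0`. What remains is the Schur complement of
`Λ = σ² Γ`, which is `σ²` times that of `Γ` (`Γ_zz` is invertible as a diagonal block of a positive
definite matrix).
-/

open Matrix

namespace Matrix

variable {m n K : Type*}

theorem PosDef.topLeft_of_fromBlocks {R : Type*} [Ring R] [PartialOrder R] [StarRing R]
    {A : Matrix m m R} {B : Matrix m n R} {C : Matrix n m R} {D : Matrix n n R}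
    (h : (fromBlocks A B C D).PosDef) : A.PosDef :=
  h.submatrix Sum.inl_injective

variable [Fintype m] [Field K]

theorem transpose_fromRows_mul_fromBlocks_mul_fromRows_eq_zero [Fintype n]
    (B : Matrix m n K) (M : Matrix m m K) (k : K) :
    (fromRows B (k • B))ᵀ * fromBlocks (k • M) (-M) (-M) (k⁻¹ • M) * fromRows B (k • B) = 0 := by
  rw [transpose_fromRows, fromCols_mul_fromBlocks, fromCols_mul_fromRows]
  simp only [transpose_smul, Matrix.smul_mul, Matrix.mul_smul, Matrix.mul_neg, Matrix.neg_mul,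
    Matrix.add_mul, smul_smul]
  rcases eq_or_ne k 0 with rfl | hk
  · simp
  · rw [inv_mul_cancel₀ hk, one_smul, add_neg_cancel, neg_add_cancel, smul_zero, zero_add]

theorem smul_schur_complement [DecidableEq m] {k : K} (hk : k ≠ 0) {A : Matrix m m K}
    (hA : IsUnit A.det) (B : Matrix m n K) (D : Matrix n n K) :
    k • D - (k • B)ᵀ * (k • A)⁻¹ * (k • B) = k • (D - Bᵀ * A⁻¹ * B) := by
  let := invertibleOfNonzero hk
  rw [inv_smul A k hA, invOf_eq_inv]
  simp only [transpose_smul, Matrix.smul_mul, Matrix.mul_smul, smul_smul, smul_sub]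
  rw [inv_mul_cancel₀ hk, mul_one]

end Matrix

theorem V_homoscedastic_general (p h : ℕ)
    (Γzz : Matrix (Fin p) (Fin p) ℝ) (Γzx : Matrix (Fin p) (Fin h) ℝ)
    (Γxx : Matrix (Fin h) (Fin h) ℝ)
    (hΓ : (Matrix.fromBlocks Γzz Γzx Γzxᵀ Γxx).PosDef)
    (σ2 : ℝ) (hσ : 0 < σ2)
    (D : Matrix (Fin h) (Fin h) ℝ) :
    D⁻¹ *
      ((Matrix.fromRows Γzx (σ2 • Γzx))ᵀ *
        (Matrix.fromBlocks (σ2 • Γzz⁻¹) (-Γzz⁻¹) (-Γzz⁻¹) (σ2⁻¹ • Γzz⁻¹)) *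
        (Matrix.fromRows Γzx (σ2 • Γzx))
       + σ2 • Γxx - (σ2 • Γzx)ᵀ * (σ2 • Γzz)⁻¹ * (σ2 • Γzx)) *
      D⁻¹
    = σ2 • (D⁻¹ * (Γxx - Γzxᵀ * Γzz⁻¹ * Γzx) * D⁻¹) := by
  have hdet : IsUnit Γzz.det := (isUnit_iff_isUnit_det Γzz).mp hΓ.topLeft_of_fromBlocks.isUnit
  rw [add_sub_assoc, transpose_fromRows_mul_fromBlocks_mul_fromRows_eq_zero, zero_add,
    smul_schur_complement hσ.ne' hdet, Matrix.mul_smul, Matrix.smul_mul]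

theorem V_homoscedastic (p h : ℕ)
    (Γzz : Matrix (Fin p) (Fin p) ℝ) (Γzx : Matrix (Fin p) (Fin h) ℝ)
    (Γxx : Matrix (Fin h) (Fin h) ℝ)
    (hΓ : (Matrix.fromBlocks Γzz Γzx Γzxᵀ Γxx).PosDef)
    (σ2 : ℝ) (hσ : 0 < σ2)
    (D : Matrix (Fin h) (Fin h) ℝ) (hD : IsUnit D.det) :
    D⁻¹ *
      ((Matrix.fromRows Γzx (σ2 • Γzx))ᵀ *
        (Matrix.fromBlocks (σ2 • Γzz⁻¹) (-Γzz⁻¹) (-Γzz⁻¹) (σ2⁻¹ • Γzz⁻¹)) *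
        (Matrix.fromRows Γzx (σ2 • Γzx))
       + σ2 • Γxx - (σ2 • Γzx)ᵀ * (σ2 • Γzz)⁻¹ * (σ2 • Γzx)) *
      D⁻¹
    = σ2 • (D⁻¹ * (Γxx - Γzxᵀ * Γzz⁻¹ * Γzx) * D⁻¹) :=
  V_homoscedastic_general p h Γzz Γzx Γxx hΓ σ2 hσ D
end

section
/- For symmetric positive definite matrices Γ_zz, Λ_zz of size p and a 2p×h matrix W, the matrix W' Ω_zz W is positive semidefinite, where Ω_zz = [[Γ_zz⁻¹ Λ_zz Γ_zz⁻¹, −Γ_zz⁻¹], [−Γ_zz⁻¹, Λ_zz⁻¹]]. -/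
/-!
With `P = [Λ Γ⁻¹, -1]` and `Γ⁻¹` symmetric, `Ω = Pᵀ Λ⁻¹ P`, so `Wᵀ Ω W = (P W)ᵀ Λ⁻¹ (P W)` is a
Gram matrix of the positive definite `Λ⁻¹`.
-/

open Matrix

namespace Matrix

variable {K m n : Type*} [Field K] [StarRing K] [Fintype n] [DecidableEq n]

theorem fromBlocks_neg_eq_conjTranspose_mul_inv_mul {Λ : Matrix n n K} (hΛ : Λ.IsHermitian)
    (hΛdet : IsUnit Λ.det) (B : Matrix n m K) :
    fromBlocks (Bᴴ * Λ * B) (-Bᴴ) (-B) Λ⁻¹ =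
      (fromCols (Λ * B) (-1))ᴴ * Λ⁻¹ * fromCols (Λ * B) (-1) := by
  rw [conjTranspose_fromCols_eq_fromRows_conjTranspose, fromRows_mul, fromRows_mul_fromCols,
    conjTranspose_mul, hΛ.eq]
  simp [Matrix.mul_assoc, nonsing_inv_mul_cancel_left _ _ hΛdet,
    mul_nonsing_inv_cancel_right _ _ hΛdet]

theorem PosDef.posSemidef_fromBlocks_neg [PartialOrder K] [Fintype m] {Λ : Matrix n n K}
    (hΛ : Λ.PosDef) (B : Matrix n m K) : (fromBlocks (Bᴴ * Λ * B) (-Bᴴ) (-B) Λ⁻¹).PosSemidef := by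
  rw [fromBlocks_neg_eq_conjTranspose_mul_inv_mul hΛ.isHermitian
    ((isUnit_iff_isUnit_det Λ).mp hΛ.isUnit) B]
  exact hΛ.inv.posSemidef.conjTranspose_mul_mul_same _

end Matrix

theorem W_omega_W_posSemidef (p h : ℕ)
    (Γzz Λzz : Matrix (Fin p) (Fin p) ℝ)
    (hΓzz : Γzz.PosDef) (hΛzz : Λzz.PosDef)
    (W : Matrix (Fin p ⊕ Fin p) (Fin h) ℝ) :
    (Wᵀ * (Matrix.fromBlocks (Γzz⁻¹ * Λzz * Γzz⁻¹) (-Γzz⁻¹) (-Γzz⁻¹) Λzz⁻¹) * W).PosSemidef := by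
  have hΓinv : (Γzz⁻¹)ᴴ = Γzz⁻¹ := hΓzz.isHermitian.inv.eq
  have hΩ := hΛzz.posSemidef_fromBlocks_neg Γzz⁻¹
  rw [hΓinv] at hΩ
  simpa only [conjTranspose_eq_transpose_of_trivial] using hΩ.conjTranspose_mul_mul_same W
end
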